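/- Along solutions of z' = w, w' = −i s K w + μ z, the rank-one projector satisfies (z z*)' = 2[Φ, z z*] + (i s/2)[z z*, K], where Φ = (1/2)(w z* − z w*) + (i s/4)(K z z* + z z* K), provided ⟨z̄,z⟩ = 1 and ⟨w̄,z⟩ + ⟨w,z̄⟩ = 0. -/

import Mathlib

/-- The rank-one matrix `z z*` with entries `zᵢ conj(zⱼ)`. -/
noncomputable def zzStar {ℓ : ℕ} (z : Fin ℓ → ℂ) : Matrix (Fin ℓ) (Fin ℓ) ℂ :=
  Matrix.of fun i j => z i * (starRingEnd ℂ) (z j)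

/-- `Φ_0 = (1/2)(w z* − z w*)`. -/
noncomputable def phiZero {ℓ : ℕ} (z w : Fin ℓ → ℂ) : Matrix (Fin ℓ) (Fin ℓ) ℂ :=
  Matrix.of fun i j => (1 / 2 : ℂ) *
    (w i * (starRingEnd ℂ) (z j) - z i * (starRingEnd ℂ) (w j))

/-- The complex magnetic momentum map
`Φ = (1/2)(w z* − z w*) + (i s/4)(K z z* + z z* K)`. -/
noncomputable def phiU {ℓ : ℕ} (s : ℝ) (K : Fin ℓ → ℝ) (z w : Fin ℓ → ℂ) :
    Matrix (Fin ℓ) (Fin ℓ) ℂ :=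
  phiZero z w + (Complex.I * s / 4) •
    (Matrix.diagonal (fun i => (K i : ℂ)) * zzStar z
      + zzStar z * Matrix.diagonal (fun i => (K i : ℂ)))

/-- along solutions of `z' = w`, `w' = −isKw + μz` on the
constraint set, the rank-one projector satisfies
`(zz*)' = 2[Φ, zz*] + (is/2)[zz*, K]`. -/
theorem magnetic_projector_derivative_complex
    (ℓ : ℕ) (z w : ℝ → Fin ℓ → ℂ) (K : Fin ℓ → ℝ) (s : ℝ) (μ : ℝ → ℝ)
    (hz : ∀ i t, HasDerivAt (fun τ => z τ i) (w t i) t)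
    (hw : ∀ i t, HasDerivAt (fun τ => w τ i)
      (-(Complex.I * s * K i * w t i) + μ t * z t i) t)
    (hnorm : ∀ t, ∑ i, Complex.normSq (z t i) = 1)
    (hperp : ∀ t, ∑ i, (w t i * (starRingEnd ℂ) (z t i)
      + (starRingEnd ℂ) (w t i) * z t i) = 0) :
    ∀ i j t, HasDerivAt (fun τ => zzStar (z τ) i j)
      (((2 : ℂ) • (phiU s K (z t) (w t) * zzStar (z t)
          - zzStar (z t) * phiU s K (z t) (w t))
        + (Complex.I * s / 2) •
          (zzStar (z t) * Matrix.diagonal (fun i => (K i : ℂ))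
            - Matrix.diagonal (fun i => (K i : ℂ)) * zzStar (z t))) i j) t := by
  intro i j t
  set Z := z t with hZdef
  set W := w t with hWdef
  have hconj : HasDerivAt (fun τ => (starRingEnd ℂ) (z τ j)) ((starRingEnd ℂ) (W j)) t := by
    simpa using (hz j t).star
  have hd : HasDerivAt (fun τ => zzStar (z τ) i j)
      (W i * (starRingEnd ℂ) (Z j) + Z i * (starRingEnd ℂ) (W j)) t := by
    simp only [zzStar, Matrix.of_apply]; exact (hz i t).mul hconj
  set A : Matrix (Fin ℓ) (Fin ℓ) ℂ := Matrix.of fun a b => W a * (starRingEnd ℂ) (Z b) with hA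
  set B : Matrix (Fin ℓ) (Fin ℓ) ℂ := Matrix.of fun a b => Z a * (starRingEnd ℂ) (W b) with hB
  set P : Matrix (Fin ℓ) (Fin ℓ) ℂ := zzStar Z with hP
  set D : Matrix (Fin ℓ) (Fin ℓ) ℂ := Matrix.diagonal (fun k => (K k : ℂ)) with hD
  set S : ℂ := ∑ k, W k * (starRingEnd ℂ) (Z k) with hS
  have hnorm' : ∑ k, Z k * (starRingEnd ℂ) (Z k) = 1 := by
    have h1 := hnorm t
    calc ∑ k, Z k * (starRingEnd ℂ) (Z k)
        = ∑ k, ((Complex.normSq (Z k) : ℝ) : ℂ) := by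
          refine Finset.sum_congr rfl fun k _ => ?_
          rw [Complex.mul_conj]
      _ = ((∑ k, Complex.normSq (Z k) : ℝ) : ℂ) := by push_cast; ring
      _ = 1 := by rw [h1]; norm_num
  have hS3 : ∑ k, (starRingEnd ℂ) (W k) * Z k = -S := by
    have h2 := hperp t
    rw [Finset.sum_add_distrib] at h2
    rw [hS]
    linear_combination h2
  have hPP : P * P = P := by
    ext a b
    simp only [hP, Matrix.mul_apply, zzStar, Matrix.of_apply]
    calc ∑ k, Z a * (starRingEnd ℂ) (Z k) * (Z k * (starRingEnd ℂ) (Z b))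
        = Z a * (starRingEnd ℂ) (Z b) * ∑ k, Z k * (starRingEnd ℂ) (Z k) := by
          rw [Finset.mul_sum]
          exact Finset.sum_congr rfl fun k _ => by ring
      _ = Z a * (starRingEnd ℂ) (Z b) := by rw [hnorm']; ring
  have hAP : A * P = A := by
    ext a b
    simp only [hA, hP, Matrix.mul_apply, zzStar, Matrix.of_apply]
    calc ∑ k, W a * (starRingEnd ℂ) (Z k) * (Z k * (starRingEnd ℂ) (Z b))
        = W a * (starRingEnd ℂ) (Z b) * ∑ k, Z k * (starRingEnd ℂ) (Z k) := by
          rw [Finset.mul_sum]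
          exact Finset.sum_congr rfl fun k _ => by ring
      _ = W a * (starRingEnd ℂ) (Z b) := by rw [hnorm']; ring
  have hPB : P * B = B := by
    ext a b
    simp only [hB, hP, Matrix.mul_apply, zzStar, Matrix.of_apply]
    calc ∑ k, Z a * (starRingEnd ℂ) (Z k) * (Z k * (starRingEnd ℂ) (W b))
        = Z a * (starRingEnd ℂ) (W b) * ∑ k, Z k * (starRingEnd ℂ) (Z k) := by
          rw [Finset.mul_sum]
          exact Finset.sum_congr rfl fun k _ => by ring
      _ = Z a * (starRingEnd ℂ) (W b) := by rw [hnorm']; ring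
  have hBP : B * P = (-S) • P := by
    ext a b
    simp only [hB, hP, Matrix.mul_apply, zzStar, Matrix.of_apply, Matrix.smul_apply,
      smul_eq_mul]
    calc ∑ k, Z a * (starRingEnd ℂ) (W k) * (Z k * (starRingEnd ℂ) (Z b))
        = (Z a * (starRingEnd ℂ) (Z b)) * ∑ k, (starRingEnd ℂ) (W k) * Z k := by
          rw [Finset.mul_sum]
          exact Finset.sum_congr rfl fun k _ => by ring
      _ = -S * (Z a * (starRingEnd ℂ) (Z b)) := by rw [hS3]; ring
  have hPA : P * A = S • P := by
    ext a b
    simp only [hA, hP, Matrix.mul_apply, zzStar, Matrix.of_apply, Matrix.smul_apply,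
      smul_eq_mul]
    calc ∑ k, Z a * (starRingEnd ℂ) (Z k) * (W k * (starRingEnd ℂ) (Z b))
        = (Z a * (starRingEnd ℂ) (Z b)) * ∑ k, W k * (starRingEnd ℂ) (Z k) := by
          rw [Finset.mul_sum]
          exact Finset.sum_congr rfl fun k _ => by ring
      _ = S * (Z a * (starRingEnd ℂ) (Z b)) := by rw [hS]; ring
  have hΦ : phiU s K Z W = (1 / 2 : ℂ) • (A - B) + (Complex.I * s / 4) • (D * P + P * D) := by
    ext a b
    simp only [phiU, phiZero, zzStar, hA, hB, hP, hD, Matrix.add_apply, Matrix.smul_apply,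
      Matrix.sub_apply, Matrix.of_apply, smul_eq_mul]
  have hassoc1 : D * (P * P) = D * P := by rw [hPP]
  have hassoc2 : P * (P * D) = P * D := by rw [← Matrix.mul_assoc, hPP]
  have hmat : (2 : ℂ) • (phiU s K Z W * P - P * phiU s K Z W)
      + (Complex.I * s / 2) • (P * D - D * P) = A + B := by
    rw [hΦ]
    simp only [Matrix.add_mul, Matrix.mul_add, Matrix.smul_mul, Matrix.mul_smul,
      Matrix.sub_mul, Matrix.mul_sub, Matrix.mul_assoc]
    rw [hassoc1, hassoc2, hAP, hBP, hPA, hPB]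
    module
  convert hd using 1
  have hentry := congrFun (congrFun hmat i) j
  exact hentry.trans (by simp [hA, hB, Matrix.add_apply])
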